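/- For every partition λ and non-negative integer k, the number of 1-asymmetric partitions ν with λ ≺ ν and |ν/λ| = k equals the number of 1-asymmetric partitions μ with μ ≺' λ and |λ/μ| = k. Equivalently, π_{P¹_asym} ∘ U_x = π_{P¹_asym} ∘ D*_x. -/

import Mathlib

/-!
Let `d` be the Durfee size of `lam`. A `1`-asymmetric partition `P` with `P_d ≤ d` is determined
by its first `d` rows, since below them `P_i = #{j < d | i ≤ P_j}`. If `lam ≺ ν` with `ν`
`1`-asymmetric, then `ν_j ∈ {lam'_j - 1, lam'_j}` for `j < d`; if `μ ≺' lam`, then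
`μ_j ∈ {lam_j - 1, lam_j}`. Recording the set `S` of rows taking the larger, resp. smaller, value
identifies both sides with sets `S ⊆ {0, …, d - 1}`, and in both cases the strip has
`2 #S + ∑_{j<d} (lam'_j - lam_j - 1)` cells. When such sets exist, they are exactly the sets
containing `{j | lam_j = lam'_j}` and avoiding `T + 1` (for `ν`), resp. `T` (for `μ`), where
`T = {j | lam'_{j+1} = lam_j + 1}`; so for each size there are equally many of them.
-/

/-- A partition, encoded as a weakly decreasing eventually-zero sequence of
natural numbers (`part i` is the `(i+1)`-st part). -/
structure Ptn where
  part : ℕ → ℕ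
  anti : Antitone part
  fin : ∃ N, ∀ n, N ≤ n → part n = 0

namespace Ptn

/-- The number of cells of the skew diagram `lam / mu`. -/
noncomputable def skewSize (lam mu : Ptn) : ℕ := ∑ᶠ i, (lam.part i - mu.part i)

/-- `HStrip mu lam` means `mu ≺ lam`, i.e. `mu ⊆ lam` and the skew diagram
`lam/mu` is a horizontal strip (at most one cell in each column). -/
def HStrip (mu lam : Ptn) : Prop :=
  (∀ i, mu.part i ≤ lam.part i) ∧ ∀ i, lam.part (i + 1) ≤ mu.part i

/-- `VStrip mu lam` means `mu ≺' lam`, i.e. `mu ⊆ lam` and the skew diagram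
`lam/mu` is a vertical strip (at most one cell in each row). -/
def VStrip (mu lam : Ptn) : Prop :=
  (∀ i, mu.part i ≤ lam.part i) ∧ ∀ i, lam.part i ≤ mu.part i + 1

/-- The union `lam ∪ rho` of two Young diagrams. -/
def union (a b : Ptn) : Ptn where
  part i := max (a.part i) (b.part i)
  anti := fun _ _ h => max_le_max (a.anti h) (b.anti h)
  fin := by
    obtain ⟨N, hN⟩ := a.fin
    obtain ⟨M, hM⟩ := b.fin
    exact ⟨max N M, fun n hn => by
      show max (a.part n) (b.part n) = 0
      rw [hN n (le_trans (le_max_left _ _) hn), hM n (le_trans (le_max_right _ _) hn)]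
      rfl⟩

/-- The intersection `lam ∩ rho` of two Young diagrams. -/
def inter (a b : Ptn) : Ptn where
  part i := min (a.part i) (b.part i)
  anti := fun _ _ h => min_le_min (a.anti h) (b.anti h)
  fin := by
    obtain ⟨N, hN⟩ := a.fin
    exact ⟨N, fun n hn => by
      show min (a.part n) (b.part n) = 0
      simp [hN n hn]⟩

/-- The empty partition. -/
def empty : Ptn := ⟨fun _ => 0, fun _ _ _ => le_refl 0, ⟨0, fun _ _ => rfl⟩⟩

/-- The conjugate partition: `(conj lam).part j` is the length of column `j`. -/
noncomputable def conj (lam : Ptn) : Ptn where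
  part j := Set.ncard {i | j < lam.part i}
  anti := by
    intro j k h
    apply Set.ncard_le_ncard
    · intro i hi
      exact lt_of_le_of_lt h hi
    · obtain ⟨N, hN⟩ := lam.fin
      apply Set.Finite.subset (Set.finite_Iio N)
      intro i hi
      by_contra hc
      have hNi : N ≤ i := not_lt.mp (fun h => hc (Set.mem_Iio.mpr h))
      rw [Set.mem_setOf_eq, hN i hNi] at hi
      exact Nat.not_lt_zero j hi
  fin := by
    refine ⟨lam.part 0, fun n hn => ?_⟩
    have h : {i | n < lam.part i} = (∅ : Set ℕ) := by
      ext i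
      simp only [Set.mem_setOf_eq, Set.mem_empty_iff_false, iff_false, not_lt]
      exact le_trans (lam.anti (Nat.zero_le i)) hn
    show Set.ncard {i | n < lam.part i} = 0
    rw [h, Set.ncard_empty]

end Ptn

namespace Ptn

/-- A partition is `1`-asymmetric if its Frobenius notation is
`(a₁,…,a_l | a₁+1,…,a_l+1)`, i.e. on the Durfee square each column exceeds the
corresponding row by one: `lam'_i = lam_i + 1`. -/
def Asym1 (lam : Ptn) : Prop := ∀ i, i < lam.part i → (conj lam).part i = lam.part i + 1

/-- A partition is `(-1)`-asymmetric if its Frobenius notation is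
`(a₁+1,…,a_l+1 | a₁,…,a_l)`, i.e. on the Durfee square each row exceeds the
corresponding column by one: `lam_i = lam'_i + 1`. -/
def AsymNeg1 (lam : Ptn) : Prop := ∀ i, i < lam.part i → lam.part i = (conj lam).part i + 1

end Ptn

open Finset

theorem Finset.card_subsets_between {α : Type*} [DecidableEq α] {F C : Finset α} (hFC : F ⊆ C)
    (p : ℕ → Prop) [DecidablePred p] :
    Nat.card {S : Finset α // F ⊆ S ∧ S ⊆ C ∧ p #S} =
      ∑ m ∈ range (#C - #F + 1), (#C - #F).choose m * if p (m + #F) then 1 else 0 := by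
  have hcard : Nat.card {S : Finset α // F ⊆ S ∧ S ⊆ C ∧ p #S} =
      #{S ∈ C.powerset | F ⊆ S ∧ p #S} := by
    rw [← Nat.card_eq_finsetCard]
    exact Nat.card_congr (Equiv.subtypeEquivRight fun S => by
      simp only [mem_filter, mem_powerset]; tauto)
  have hsplit : #{S ∈ C.powerset | F ⊆ S ∧ p #S} = #{T ∈ (C \ F).powerset | p (#T + #F)} := by
    refine card_nbij' (· \ F) (· ∪ F) (fun S hS => ?_) (fun T hT => ?_) (fun S hS => ?_)
      (fun T hT => ?_)
    · simp only [coe_filter, Set.mem_ofPred_eq, mem_powerset, subset_sdiff] at hS ⊢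
      rw [card_sdiff_of_subset hS.2.1, Nat.sub_add_cancel (card_le_card hS.2.1)]
      exact ⟨⟨sdiff_subset.trans hS.1, disjoint_sdiff_self_left⟩, hS.2.2⟩
    · simp only [coe_filter, Set.mem_ofPred_eq, mem_powerset, subset_sdiff] at hT ⊢
      rw [card_union_of_disjoint hT.1.2]
      exact ⟨union_subset hT.1.1 hFC, subset_union_right, hT.2⟩
    · simp only [coe_filter, Set.mem_ofPred_eq, mem_powerset] at hS
      exact sdiff_union_of_subset hS.2.1
    · simp only [coe_filter, Set.mem_ofPred_eq, mem_powerset, subset_sdiff] at hT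
      exact union_sdiff_cancel_right hT.1.2
  rw [hcard, hsplit, card_filter, sum_powerset_apply_card (fun m => if p (m + #F) then 1 else 0),
    card_sdiff_of_subset hFC]
  simp only [smul_eq_mul]

theorem Finset.card_subsets_between_congr {α : Type*} [DecidableEq α] {F C F' C' : Finset α}
    (hFC : F ⊆ C) (hFC' : F' ⊆ C') (hF : #F = #F') (hC : #C = #C') (p : ℕ → Prop) :
    Nat.card {S : Finset α // F ⊆ S ∧ S ⊆ C ∧ p #S} =
      Nat.card {S : Finset α // F' ⊆ S ∧ S ⊆ C' ∧ p #S} := by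
  classical
  rw [card_subsets_between hFC, card_subsets_between hFC', hF, hC]

namespace Ptn

variable {P Q : Ptn} {D i j : ℕ}

theorem ext (h : ∀ i, P.part i = Q.part i) : P = Q := by
  obtain ⟨p, _, _⟩ := P
  obtain ⟨q, _, _⟩ := Q
  simp only [mk.injEq]
  exact funext h

theorem exists_setOf_lt_part_eq_Iio (P : Ptn) (j : ℕ) : ∃ n, {i | j < P.part i} = Set.Iio n := by
  obtain ⟨N, hN⟩ := P.fin
  have h : ∃ n, P.part n ≤ j := ⟨N, by simp [hN N le_rfl]⟩
  refine ⟨Nat.find h, Set.ext fun i => ⟨fun hi => ?_, fun hi => ?_⟩⟩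
  · by_contra hni
    exact absurd ((P.anti (not_lt.mp hni)).trans (Nat.find_spec h)) (not_le.mpr hi)
  · exact not_le.mp (Nat.find_min h hi)

theorem lt_conj_iff : i < (conj P).part j ↔ j < P.part i := by
  obtain ⟨n, hn⟩ := exists_setOf_lt_part_eq_Iio P j
  have hconj : (conj P).part j = n := by
    simp only [conj, hn, ← coe_range, Set.ncard_coe_finset, card_range]
  rw [hconj, ← Set.mem_Iio, ← hn, Set.mem_ofPred_eq]

theorem conj_conj (P : Ptn) : conj (conj P) = P :=
  ext fun _ => eq_of_forall_lt_iff fun _ => by rw [lt_conj_iff, lt_conj_iff]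

theorem conj_part_le_conj_part (h : ∀ i, P.part i ≤ Q.part i) (j : ℕ) :
    (conj P).part j ≤ (conj Q).part j :=
  le_of_forall_lt fun _ ht => lt_conj_iff.mpr ((lt_conj_iff.mp ht).trans_le (h _))

theorem conj_part_le_of_part_eq_zero {N : ℕ} (hN : ∀ n, N ≤ n → P.part n = 0) (j : ℕ) :
    (conj P).part j ≤ N :=
  le_of_forall_lt fun t ht => by
    by_contra htN
    have := hN t (not_lt.mp htN)
    have := lt_conj_iff.mp ht
    omega

theorem part_eq_card_conj (hD : P.part D ≤ D) (hi : D ≤ i) :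
    P.part i = #{j ∈ range D | i < (conj P).part j} := by
  conv_lhs => rw [← conj_conj P]
  show Set.ncard _ = _
  rw [← Set.ncard_coe_finset]
  congr 1
  ext j
  simp only [Set.mem_ofPred_eq, coe_filter, mem_range]
  refine ⟨fun h => ⟨?_, h⟩, fun h => h.2⟩
  have := lt_conj_iff.mp (hi.trans_lt h)
  omega

theorem HStrip.conj_part_le_succ (h : HStrip P Q) (j : ℕ) :
    (conj Q).part j ≤ (conj P).part j + 1 := by
  by_contra hlt
  have h1 : j < Q.part ((conj P).part j + 1) := lt_conj_iff.mp (by omega)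
  have h2 : (conj P).part j < (conj P).part j := lt_conj_iff.mpr (h1.trans_le (h.2 _))
  exact lt_irrefl _ h2

theorem VStrip.conj_part_succ_le (h : VStrip P Q) (j : ℕ) :
    (conj Q).part (j + 1) ≤ (conj P).part j :=
  le_of_forall_lt fun t ht => by
    have h1 := lt_conj_iff.mp ht
    have h2 := h.2 t
    exact lt_conj_iff.mpr (by omega)

theorem exists_part_le_self (P : Ptn) : ∃ n, P.part n ≤ n := by
  obtain ⟨N, hN⟩ := P.fin
  exact ⟨N, by simp [hN N le_rfl]⟩

noncomputable def durfee (P : Ptn) : ℕ := Nat.find (exists_part_le_self P)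

theorem part_durfee_le (P : Ptn) : P.part (durfee P) ≤ durfee P :=
  Nat.find_spec (exists_part_le_self P)

theorem lt_durfee_iff : i < durfee P ↔ i < P.part i := by
  refine ⟨fun h => not_le.mp (Nat.find_min (exists_part_le_self P) h), fun h => ?_⟩
  by_contra hi
  have := (P.anti (not_lt.mp hi)).trans (part_durfee_le P)
  omega

theorem durfee_le_part (hi : i < durfee P) : durfee P ≤ P.part i := by
  have := lt_durfee_iff.mp (show durfee P - 1 < durfee P by omega)
  have := P.anti (show i ≤ durfee P - 1 by omega)
  omega

theorem durfee_le_conj_part (hi : i < durfee P) : durfee P ≤ (conj P).part i := by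
  have h : i < P.part (durfee P - 1) := hi.trans_le (durfee_le_part (by omega))
  have := lt_conj_iff.mpr h
  omega

noncomputable def size (P : Ptn) : ℕ := ∑ᶠ i, P.part i

theorem size_eq_sum_range {N : ℕ} (hN : ∀ n, N ≤ n → P.part n = 0) :
    size P = ∑ i ∈ range N, P.part i :=
  finsum_eq_sum_of_support_subset _ fun i hi => by
    by_contra hiN
    exact hi (hN i (by simpa using hiN))

theorem skewSize_add_size (h : ∀ i, Q.part i ≤ P.part i) : skewSize P Q + size Q = size P := by
  obtain ⟨N, hN⟩ := P.fin
  have hQ : ∀ n, N ≤ n → Q.part n = 0 := fun n hn => by have := h n; simp_all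
  rw [size_eq_sum_range hN, size_eq_sum_range hQ, skewSize,
    finsum_eq_sum_of_support_subset _ (s := range N) fun i hi => by
      by_contra hiN
      exact hi (by simp [hN i (by simpa using hiN)]),
    ← sum_add_distrib]
  exact sum_congr rfl fun i _ => Nat.sub_add_cancel (h i)

theorem size_eq_sum_square (hD : P.part D ≤ D) :
    size P = ∑ j ∈ range D, (P.part j + ((conj P).part j - D)) := by
  obtain ⟨N, hN⟩ := P.fin
  have hND : ∀ n, N + D ≤ n → P.part n = 0 := fun n hn => hN n (by omega)
  have hcol : ∀ j ∈ range D, #{i ∈ Ico D (N + D) | i < (conj P).part j} = (conj P).part j - D :=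
    fun j _ => by
      rw [Ico_filter_lt, Nat.card_Ico,
        min_eq_right ((conj_part_le_of_part_eq_zero hN j).trans (by omega))]
  rw [size_eq_sum_range hND, ← sum_range_add_sum_Ico _ (by omega : D ≤ N + D),
    sum_congr rfl fun i hi => part_eq_card_conj hD (mem_Ico.mp hi).1, sum_add_distrib]
  simp only [card_filter]
  rw [sum_comm]
  simp only [← card_filter]
  rw [sum_congr rfl hcol]

theorem Asym1.conj_part_sub (hP : Asym1 P) (hj : j < D) :
    (conj P).part j - D = P.part j + 1 - D := by
  by_cases h : j < P.part j
  · rw [hP j h]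
  · have : ¬ j < (conj P).part j := fun h' => h (lt_conj_iff.mp h')
    omega

theorem Asym1.part_eq_card (hP : Asym1 P) (hD : P.part D ≤ D) (hi : D ≤ i) :
    P.part i = #{j ∈ range D | i ≤ P.part j} := by
  rw [part_eq_card_conj hD hi]
  refine congrArg card (filter_congr fun j hj => ?_)
  have := hP.conj_part_sub (mem_range.mp hj)
  omega

theorem Asym1.ext_of_rows (hP : Asym1 P) (hQ : Asym1 Q) (hPD : P.part D ≤ D)
    (hQD : Q.part D ≤ D) (h : ∀ j < D, P.part j = Q.part j) : P = Q := by
  refine ext fun i => ?_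
  by_cases hi : i < D
  · exact h i hi
  · rw [hP.part_eq_card hPD (not_lt.mp hi), hQ.part_eq_card hQD (not_lt.mp hi)]
    exact congrArg card (filter_congr fun j hj => by rw [h j (mem_range.mp hj)])

theorem Asym1.size_eq (hP : Asym1 P) (hD : P.part D ≤ D) :
    size P = ∑ j ∈ range D, (P.part j + (P.part j + 1 - D)) := by
  rw [size_eq_sum_square hD]
  exact sum_congr rfl fun j hj => by rw [hP.conj_part_sub (mem_range.mp hj)]

theorem antitoneOn_Iio_of_succ_le {r : ℕ → ℕ} (h : ∀ j, j + 1 < D → r (j + 1) ≤ r j) :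
    AntitoneOn r (Set.Iio D) :=
  antitoneOn_of_succ_le Set.ordConnected_Iio fun j _ _ hj => h j hj

section OfRows

variable {r : ℕ → ℕ}

theorem lt_card_filter_le_iff (hr : AntitoneOn r (Set.Iio D)) {t : ℕ} (hi : i < D) :
    i < #{j ∈ range D | t ≤ r j} ↔ t ≤ r i := by
  constructor
  · intro h
    by_contra hti
    have hsub : {j ∈ range D | t ≤ r j} ⊆ range i := fun j hj => by
      simp only [mem_filter, mem_range] at hj ⊢
      by_contra hij
      have := hr (show i ∈ Set.Iio D from hi) (show j ∈ Set.Iio D from hj.1) (not_lt.mp hij)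
      omega
    have := card_le_card hsub
    simp only [card_range] at this
    omega
  · intro h
    have hsub : range (i + 1) ⊆ {j ∈ range D | t ≤ r j} := fun j hj => by
      simp only [mem_filter, mem_range] at hj ⊢
      exact ⟨by omega, h.trans (hr (show j ∈ Set.Iio D by simp; omega) (show i ∈ Set.Iio D from hi)
        (by omega))⟩
    simpa using card_le_card hsub

variable (hr : AntitoneOn r (Set.Iio D)) (hD : ∀ j < D, D ≤ r j + 1)

/-- The `1`-asymmetric partition with diagonal rows `r 0, …, r (D - 1)`. -/
def ofRows : Ptn where
  part i := if i < D then r i else #{j ∈ range D | i ≤ r j}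
  anti := antitone_nat_of_succ_le fun i => by
    by_cases hi : i + 1 < D
    · rw [if_pos hi, if_pos (by omega)]
      exact hr (show i ∈ Set.Iio D by simp; omega) (show i + 1 ∈ Set.Iio D from hi) (by omega)
    rw [if_neg hi]
    by_cases hi' : i < D
    · rw [if_pos hi']
      by_contra hlt
      have hcard : #{j ∈ range D | i + 1 ≤ r j} ≤ D := (card_filter_le _ _).trans (card_range D).le
      have := (lt_card_filter_le_iff hr (t := i + 1) hi').mp (by have := hD i hi'; omega)
      omega
    · rw [if_neg hi']
      exact card_le_card (monotone_filter_right _ fun j _ h => by omega)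
  fin := ⟨D + r 0 + 1, fun n hn => by
    rw [if_neg (by omega), card_eq_zero, filter_eq_empty_iff]
    intro j hj
    have := hr (show 0 ∈ Set.Iio D by simp at hj ⊢; omega) (show j ∈ Set.Iio D by simpa using hj)
      (Nat.zero_le j)
    omega⟩

theorem ofRows_part_of_lt (hi : i < D) : (ofRows hr hD).part i = r i := if_pos hi

theorem ofRows_part_of_le (hi : D ≤ i) : (ofRows hr hD).part i = #{j ∈ range D | i ≤ r j} :=
  if_neg (not_lt.mpr hi)

theorem ofRows_part_le : (ofRows hr hD).part D ≤ D := by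
  rw [ofRows_part_of_le hr hD le_rfl]
  exact (card_filter_le _ _).trans (card_range D).le

theorem asym1_ofRows : Asym1 (ofRows hr hD) := by
  intro i hi
  have hiD : i < D := by
    by_contra hiD
    have := (ofRows_part_le hr hD).trans' ((ofRows hr hD).anti (not_lt.mp hiD))
    omega
  rw [ofRows_part_of_lt hr hD hiD] at hi ⊢
  refine eq_of_forall_lt_iff fun t => ?_
  rw [lt_conj_iff]
  by_cases htD : t < D
  · rw [ofRows_part_of_lt hr hD htD]
    have := hD t htD
    have := hD i hiD
    have : t ≤ i → r i ≤ r t := hr (show t ∈ Set.Iio D from htD) (show i ∈ Set.Iio D from hiD)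
    omega
  · rw [ofRows_part_of_le hr hD (not_lt.mp htD), lt_card_filter_le_iff hr hiD]
    omega

theorem size_ofRows : size (ofRows hr hD) = ∑ j ∈ range D, (r j + (r j + 1 - D)) := by
  rw [(asym1_ofRows hr hD).size_eq (ofRows_part_le hr hD)]
  exact sum_congr rfl fun j hj => by rw [ofRows_part_of_lt hr hD (mem_range.mp hj)]

end OfRows

section Admissible

def ind (S : Finset ℕ) (j : ℕ) : ℕ := if j ∈ S then 1 else 0

theorem ind_le_one (S : Finset ℕ) (j : ℕ) : ind S j ≤ 1 := by
  unfold ind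
  split <;> omega

theorem ind_eq_one_iff {S : Finset ℕ} {j : ℕ} : ind S j = 1 ↔ j ∈ S := by
  unfold ind
  split <;> simp_all

theorem ind_eq_zero_iff {S : Finset ℕ} {j : ℕ} : ind S j = 0 ↔ j ∉ S := by
  unfold ind
  split <;> simp_all

theorem sum_ind {S : Finset ℕ} {D : ℕ} (hS : S ⊆ range D) : ∑ j ∈ range D, ind S j = #S := by
  simp only [ind, sum_boole, Nat.cast_id, filter_mem_eq_inter, inter_eq_right.mpr hS]

theorem eq_of_ind_eq {S T : Finset ℕ} {D : ℕ} (hS : S ⊆ range D) (hT : T ⊆ range D)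
    (h : ∀ j < D, ind S j = ind T j) : S = T := by
  ext j
  by_cases hj : j < D
  · rw [← ind_eq_one_iff, ← ind_eq_one_iff, h j hj]
  · exact iff_of_false (fun h => hj (mem_range.mp (hS h))) (fun h => hj (mem_range.mp (hT h)))

variable (lam : Ptn)

/-- For `s = 1`: the rows `lam'_j - 1 + [j ∈ S]`, `j < durfee lam`, interlace with `lam` as the
diagonal rows of some `ν ≻ lam` must (`admissible_one_iff`); for `s = 0`: the rows
`lam_j - [j ∈ S]` interlace with `lam` as those of some `μ ≺' lam` must (`admissible_zero_iff`). -/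
def Admissible (s : ℕ) (S : Finset ℕ) : Prop :=
  S ⊆ range (durfee lam) ∧ ∀ j < durfee lam,
    lam.part j + 1 ≤ (conj lam).part j + ind S j ∧
    (j + 1 < durfee lam → (conj lam).part (j + 1) + ind S (j + s) ≤ lam.part j + 1)

def Feasible : Prop :=
  ∀ j < durfee lam, lam.part j ≤ (conj lam).part j ∧
    (j + 1 < durfee lam → (conj lam).part (j + 1) ≤ lam.part j + 1)

noncomputable def forcedSet : Finset ℕ :=
  {j ∈ range (durfee lam) | lam.part j = (conj lam).part j}

noncomputable def tightSet : Finset ℕ :=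
  {j ∈ range (durfee lam - 1) | (conj lam).part (j + 1) = lam.part j + 1}

variable {lam} {s : ℕ} {S : Finset ℕ}

theorem Admissible.feasible (h : Admissible lam s S) : Feasible lam := fun j hj => by
  have := h.2 j hj
  have := ind_le_one S j
  have := ind_le_one S (j + s)
  omega

theorem admissible_iff (hF : Feasible lam) :
    Admissible lam s S ↔
      forcedSet lam ⊆ S ∧ S ⊆ range (durfee lam) \ (tightSet lam).image (· + s) := by
  simp only [Admissible, forcedSet, tightSet, subset_iff, mem_filter, mem_range, mem_sdiff,
    mem_image, not_exists, not_and]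
  constructor
  · rintro ⟨hS, h⟩
    refine ⟨fun j ⟨hj, heq⟩ => ?_, fun j hjS => ⟨hS hjS, fun z ⟨hz, htight⟩ hzj => ?_⟩⟩
    · have := (h j hj).1
      exact ind_eq_one_iff.mp (by have := ind_le_one S j; omega)
    · have := (h z (by omega)).2 (by omega)
      rw [hzj, ind_eq_one_iff.mpr hjS] at this
      omega
  · rintro ⟨hforced, hS⟩
    refine ⟨fun j hj => (hS hj).1, fun j hj => ⟨?_, fun hj1 => ?_⟩⟩
    · have := (hF j hj).1
      by_cases hjS : j ∈ S
      · rw [ind_eq_one_iff.mpr hjS]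
        omega
      · have hne : lam.part j ≠ (conj lam).part j := fun heq => hjS (hforced ⟨hj, heq⟩)
        rw [ind_eq_zero_iff.mpr hjS]
        omega
    · have := (hF j hj).2 hj1
      by_cases htight : (conj lam).part (j + 1) = lam.part j + 1
      · have hjS : j + s ∉ S := fun hjS => (hS hjS).2 j ⟨by omega, htight⟩ rfl
        rw [ind_eq_zero_iff.mpr hjS]
        omega
      · have := ind_le_one S (j + s)
        omega

theorem image_tightSet_subset (hs : s ≤ 1) :
    (tightSet lam).image (· + s) ⊆ range (durfee lam) := by
  intro j hj
  simp only [tightSet, mem_image, mem_filter, mem_range] at hj ⊢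
  obtain ⟨z, ⟨hz, _⟩, rfl⟩ := hj
  omega

theorem forcedSet_subset (hs : s ≤ 1) :
    forcedSet lam ⊆ range (durfee lam) \ (tightSet lam).image (· + s) := by
  intro j hj
  simp only [forcedSet, tightSet, mem_filter, mem_range, mem_sdiff, mem_image] at hj ⊢
  refine ⟨hj.1, ?_⟩
  rintro ⟨z, ⟨hz, htight⟩, rfl⟩
  have := lam.anti (show z ≤ z + 1 by omega)
  have := (conj lam).anti (show z ≤ z + 1 by omega)
  obtain rfl | rfl : s = 0 ∨ s = 1 := by omega
  · rw [add_zero] at hj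
    omega
  · omega

theorem card_admissible_congr {s' : ℕ} (hs : s ≤ 1) (hs' : s' ≤ 1) (p : ℕ → Prop) :
    Nat.card {S // Admissible lam s S ∧ p #S} = Nat.card {S // Admissible lam s' S ∧ p #S} := by
  by_cases hF : Feasible lam
  · have hcard (t : ℕ) (ht : t ≤ 1) : #(range (durfee lam) \ (tightSet lam).image (· + t)) =
        durfee lam - #(tightSet lam) := by
      rw [card_sdiff_of_subset (image_tightSet_subset ht), card_range,
        card_image_of_injective _ (add_left_injective t)]
    simp only [admissible_iff hF, and_assoc]
    exact card_subsets_between_congr (forcedSet_subset hs) (forcedSet_subset hs') rfl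
      ((hcard s hs).trans (hcard s' hs').symm) p
  · have hempty (t : ℕ) : IsEmpty {S // Admissible lam t S ∧ p #S} :=
      ⟨fun S => hF S.2.1.feasible⟩
    rw [@Nat.card_of_isEmpty _ (hempty s), @Nat.card_of_isEmpty _ (hempty s')]

end Admissible

section Raise

variable {lam ν : Ptn} {S : Finset ℕ}

variable (lam) in
noncomputable def raiseRows (S : Finset ℕ) (j : ℕ) : ℕ := (conj lam).part j - 1 + ind S j

theorem admissible_one_iff :
    Admissible lam 1 S ↔ S ⊆ range (durfee lam) ∧ ∀ j < durfee lam,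
      lam.part j ≤ raiseRows lam S j ∧
      (j + 1 < durfee lam → raiseRows lam S (j + 1) ≤ lam.part j) := by
  refine and_congr_right fun _ => forall₂_congr fun j hj => ?_
  have := durfee_le_conj_part hj
  refine and_congr (by unfold raiseRows; omega) (imp_congr_right fun hj1 => ?_)
  have := durfee_le_conj_part hj1
  unfold raiseRows
  omega

theorem Admissible.antitoneOn_raiseRows (h : Admissible lam 1 S) :
    AntitoneOn (raiseRows lam S) (Set.Iio (durfee lam)) :=
  antitoneOn_Iio_of_succ_le fun j hj =>
    have hrows := (admissible_one_iff.mp h).2 j (by omega)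
    (hrows.2 hj).trans hrows.1

theorem durfee_le_raiseRows_add_one (hj : j < durfee lam) :
    durfee lam ≤ raiseRows lam S j + 1 := by
  have := durfee_le_conj_part hj
  unfold raiseRows
  omega

noncomputable def raise (h : Admissible lam 1 S) : Ptn :=
  ofRows h.antitoneOn_raiseRows fun _ => durfee_le_raiseRows_add_one

theorem hstrip_raise (h : Admissible lam 1 S) : HStrip lam (raise h) := by
  obtain ⟨_, hrows⟩ := admissible_one_iff.mp h
  have hlam {i : ℕ} (hi : ¬ i < durfee lam) :=
    part_eq_card_conj (part_durfee_le lam) (not_lt.mp hi)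
  refine ⟨fun i => ?_, fun i => ?_⟩
  · by_cases hi : i < durfee lam
    · rw [raise, ofRows_part_of_lt _ _ hi]
      exact (hrows i hi).1
    · rw [raise, ofRows_part_of_le _ _ (not_lt.mp hi), hlam hi]
      exact card_le_card (monotone_filter_right _ fun j _ hij => by unfold raiseRows; omega)
  · by_cases hi : i + 1 < durfee lam
    · rw [raise, ofRows_part_of_lt _ _ hi]
      exact (hrows i (by omega)).2 hi
    by_cases hi' : i < durfee lam
    · rw [show i + 1 = durfee lam by omega]
      exact (ofRows_part_le _ _).trans (durfee_le_part hi')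
    · rw [raise, ofRows_part_of_le _ _ (by omega), hlam hi']
      refine card_le_card (monotone_filter_right _ fun j hj hij => ?_)
      have hjd := mem_range.mp hj
      have := durfee_le_conj_part hjd
      have := ind_le_one S j
      unfold raiseRows at hij
      omega

theorem skewSize_raise (h : Admissible lam 1 S) :
    skewSize (raise h) lam + ∑ j ∈ range (durfee lam), (lam.part j + 1) =
      2 * #S + ∑ j ∈ range (durfee lam), (conj lam).part j := by
  have hsize := skewSize_add_size (hstrip_raise h).1
  rw [raise, size_ofRows, size_eq_sum_square (part_durfee_le lam)] at hsize
  have hsum :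
      ∑ j ∈ range (durfee lam), (raiseRows lam S j + (raiseRows lam S j + 1 - durfee lam)) +
      ∑ j ∈ range (durfee lam), (lam.part j + 1) =
      2 * ∑ j ∈ range (durfee lam), ind S j + ∑ j ∈ range (durfee lam), (conj lam).part j +
      ∑ j ∈ range (durfee lam), (lam.part j + ((conj lam).part j - durfee lam)) := by
    simp only [mul_sum, ← sum_add_distrib]
    refine sum_congr rfl fun j hj => ?_
    have hjd := mem_range.mp hj
    have := durfee_le_conj_part hjd
    unfold raiseRows
    omega
  rw [sum_ind h.1] at hsum
  rw [raise]
  omega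

theorem HStrip.part_durfee_le (hA : Asym1 ν) (hH : HStrip lam ν) :
    ν.part (durfee lam) ≤ durfee lam := by
  by_contra hlt
  have h1 : durfee lam < ν.part (durfee lam + 1) :=
    lt_conj_iff.mp (by rw [hA _ (by omega)]; omega)
  have := (hH.2 (durfee lam)).trans lam.part_durfee_le
  omega

variable (lam) in
noncomputable def raisedSet (ν : Ptn) : Finset ℕ :=
  {j ∈ range (durfee lam) | ν.part j = (conj lam).part j}

theorem raiseRows_raisedSet (hA : Asym1 ν) (hH : HStrip lam ν) (hj : j < durfee lam) :
    raiseRows lam (raisedSet lam ν) j = ν.part j := by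
  have hconj : (conj ν).part j = ν.part j + 1 :=
    hA j ((lt_durfee_iff.mp hj).trans_le (hH.1 j))
  have := conj_part_le_conj_part hH.1 j
  have := hH.conj_part_le_succ j
  have := durfee_le_conj_part hj
  unfold raiseRows ind raisedSet
  simp only [mem_filter, mem_range, hj, true_and]
  split <;> omega

theorem admissible_raisedSet (hA : Asym1 ν) (hH : HStrip lam ν) :
    Admissible lam 1 (raisedSet lam ν) :=
  admissible_one_iff.mpr ⟨filter_subset _ _, fun j hj => by
    rw [raiseRows_raisedSet hA hH hj]
    exact ⟨hH.1 j, fun hj1 => (raiseRows_raisedSet hA hH hj1).trans_le (hH.2 j)⟩⟩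

theorem raise_raisedSet (hA : Asym1 ν) (hH : HStrip lam ν) :
    raise (admissible_raisedSet hA hH) = ν :=
  (asym1_ofRows _ _).ext_of_rows hA (ofRows_part_le _ _) (hH.part_durfee_le hA) fun j hj => by
    rw [ofRows_part_of_lt _ _ hj, raiseRows_raisedSet hA hH hj]

variable (lam) in
theorem card_hstrip_eq (k : ℕ) :
    Nat.card {ν : Ptn // Asym1 ν ∧ HStrip lam ν ∧ skewSize ν lam = k} =
      Nat.card {S // Admissible lam 1 S ∧
        k + ∑ j ∈ range (durfee lam), (lam.part j + 1) =
          2 * #S + ∑ j ∈ range (durfee lam), (conj lam).part j} := by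
  refine (Nat.card_congr (Equiv.ofBijective (fun S => ⟨raise S.2.1, asym1_ofRows _ _,
    hstrip_raise S.2.1, by have := skewSize_raise S.2.1; have := S.2.2; omega⟩) ⟨?_, ?_⟩)).symm
  · intro S T hST
    refine Subtype.ext (eq_of_ind_eq S.2.1.1 T.2.1.1 fun j hj => ?_)
    have := congrArg (fun P : Ptn => P.part j) (congrArg Subtype.val hST)
    simp only [raise, ofRows_part_of_lt _ _ hj, raiseRows] at this
    omega
  · rintro ⟨ν, hA, hH, hk⟩
    have := skewSize_raise (admissible_raisedSet hA hH)
    rw [raise_raisedSet hA hH] at this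
    exact ⟨⟨raisedSet lam ν, admissible_raisedSet hA hH, by omega⟩,
      Subtype.ext (raise_raisedSet hA hH)⟩

end Raise

section Lower

variable {lam μ : Ptn} {S : Finset ℕ}

variable (lam) in
def lowerRows (S : Finset ℕ) (j : ℕ) : ℕ := lam.part j - ind S j

theorem admissible_zero_iff :
    Admissible lam 0 S ↔ S ⊆ range (durfee lam) ∧ ∀ j < durfee lam,
      lowerRows lam S j < (conj lam).part j ∧
      (j + 1 < durfee lam → (conj lam).part (j + 1) ≤ lowerRows lam S j + 1) := by
  refine and_congr_right fun _ => forall₂_congr fun j hj => ?_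
  have := durfee_le_part hj
  have := ind_le_one S j
  rw [add_zero]
  unfold lowerRows
  exact and_congr (by omega) (imp_congr_right fun _ => by omega)

theorem Admissible.antitoneOn_lowerRows (h : Admissible lam 0 S) :
    AntitoneOn (lowerRows lam S) (Set.Iio (durfee lam)) :=
  antitoneOn_Iio_of_succ_le fun j hj => by
    have := ((admissible_zero_iff.mp h).2 (j + 1) hj).1
    have := ((admissible_zero_iff.mp h).2 j (by omega)).2 hj
    omega

theorem durfee_le_lowerRows_add_one (hj : j < durfee lam) :
    durfee lam ≤ lowerRows lam S j + 1 := by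
  have := durfee_le_part hj
  have := ind_le_one S j
  unfold lowerRows
  omega

noncomputable def lower (h : Admissible lam 0 S) : Ptn :=
  ofRows h.antitoneOn_lowerRows fun _ => durfee_le_lowerRows_add_one

theorem vstrip_lower (h : Admissible lam 0 S) : VStrip (lower h) lam := by
  obtain ⟨_, hrows⟩ := admissible_zero_iff.mp h
  have hlam {i : ℕ} (hi : ¬ i < durfee lam) :=
    part_eq_card_conj lam.part_durfee_le (not_lt.mp hi)
  refine ⟨fun i => ?_, fun i => ?_⟩
  · by_cases hi : i < durfee lam
    · rw [lower, ofRows_part_of_lt _ _ hi]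
      exact Nat.sub_le _ _
    · rw [lower, ofRows_part_of_le _ _ (not_lt.mp hi), hlam hi]
      exact card_le_card (monotone_filter_right _ fun j hj hij =>
        hij.trans_lt (hrows j (mem_range.mp hj)).1)
  · by_cases hi : i < durfee lam
    · rw [lower, ofRows_part_of_lt _ _ hi]
      unfold lowerRows
      have := ind_le_one S i
      omega
    rw [lower, ofRows_part_of_le _ _ (not_lt.mp hi), hlam hi]
    have hsub : {j ∈ range (durfee lam) | i < (conj lam).part j} ⊆
        insert 0 ({j ∈ range (durfee lam) | i ≤ lowerRows lam S j}.image (· + 1)) := by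
      intro j hj
      simp only [mem_filter, mem_range, mem_insert, mem_image] at hj ⊢
      obtain _ | j := j
      · exact Or.inl rfl
      · have := (hrows j (by omega)).2 hj.1
        exact Or.inr ⟨j, ⟨by omega, by omega⟩, rfl⟩
    exact (card_le_card hsub).trans
      ((card_insert_le _ _).trans (Nat.add_le_add_right card_image_le 1))

theorem skewSize_lower (h : Admissible lam 0 S) :
    skewSize lam (lower h) + ∑ j ∈ range (durfee lam), (lam.part j + 1) =
      2 * #S + ∑ j ∈ range (durfee lam), (conj lam).part j := by
  have hsize := skewSize_add_size (vstrip_lower h).1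
  rw [lower, size_ofRows, size_eq_sum_square lam.part_durfee_le] at hsize
  have hsum : ∑ j ∈ range (durfee lam), (lam.part j + ((conj lam).part j - durfee lam)) +
      ∑ j ∈ range (durfee lam), (lam.part j + 1) =
      2 * ∑ j ∈ range (durfee lam), ind S j + ∑ j ∈ range (durfee lam), (conj lam).part j +
      ∑ j ∈ range (durfee lam), (lowerRows lam S j + (lowerRows lam S j + 1 - durfee lam)) := by
    simp only [mul_sum, ← sum_add_distrib]
    refine sum_congr rfl fun j hj => ?_
    have hjd := mem_range.mp hj
    have := durfee_le_part hjd
    have := durfee_le_conj_part hjd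
    have := ind_le_one S j
    unfold lowerRows
    omega
  rw [sum_ind h.1] at hsum
  rw [lower]
  omega

variable (lam) in
noncomputable def loweredSet (μ : Ptn) : Finset ℕ :=
  {j ∈ range (durfee lam) | μ.part j + 1 = lam.part j}

theorem lowerRows_loweredSet (hV : VStrip μ lam) (hj : j < durfee lam) :
    lowerRows lam (loweredSet lam μ) j = μ.part j := by
  have := hV.1 j
  have := hV.2 j
  unfold lowerRows ind loweredSet
  simp only [mem_filter, mem_range, hj, true_and]
  split <;> omega

theorem admissible_loweredSet (hA : Asym1 μ) (hV : VStrip μ lam) :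
    Admissible lam 0 (loweredSet lam μ) := by
  refine admissible_zero_iff.mpr ⟨filter_subset _ _, fun j hj => ?_⟩
  rw [lowerRows_loweredSet hV hj]
  have hcol := conj_part_le_conj_part hV.1 j
  refine ⟨?_, fun hj1 => ?_⟩
  · by_cases hjμ : j < μ.part j
    · rw [hA j hjμ] at hcol
      omega
    · have := durfee_le_conj_part hj
      omega
  · have := durfee_le_part hj1
    have := lam.anti (show j ≤ j + 1 by omega)
    have := hV.2 j
    have hsucc := hV.conj_part_succ_le j
    rwa [hA j (by omega)] at hsucc

theorem lower_loweredSet (hA : Asym1 μ) (hV : VStrip μ lam) :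
    lower (admissible_loweredSet hA hV) = μ :=
  (asym1_ofRows _ _).ext_of_rows hA (ofRows_part_le _ _) ((hV.1 _).trans lam.part_durfee_le)
    fun j hj => by rw [ofRows_part_of_lt _ _ hj, lowerRows_loweredSet hV hj]

variable (lam) in
theorem card_vstrip_eq (k : ℕ) :
    Nat.card {μ : Ptn // Asym1 μ ∧ VStrip μ lam ∧ skewSize lam μ = k} =
      Nat.card {S // Admissible lam 0 S ∧
        k + ∑ j ∈ range (durfee lam), (lam.part j + 1) =
          2 * #S + ∑ j ∈ range (durfee lam), (conj lam).part j} := by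
  refine (Nat.card_congr (Equiv.ofBijective (fun S => ⟨lower S.2.1, asym1_ofRows _ _,
    vstrip_lower S.2.1, by have := skewSize_lower S.2.1; have := S.2.2; omega⟩) ⟨?_, ?_⟩)).symm
  · intro S T hST
    refine Subtype.ext (eq_of_ind_eq S.2.1.1 T.2.1.1 fun j hj => ?_)
    have := congrArg (fun P : Ptn => P.part j) (congrArg Subtype.val hST)
    simp only [lower, ofRows_part_of_lt _ _ hj, lowerRows] at this
    have := durfee_le_part hj
    have := ind_le_one S j
    have := ind_le_one T j
    omega
  · rintro ⟨μ, hA, hV, hk⟩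
    have := skewSize_lower (admissible_loweredSet hA hV)
    rw [lower_loweredSet hA hV] at this
    exact ⟨⟨loweredSet lam μ, admissible_loweredSet hA hV, by omega⟩,
      Subtype.ext (lower_loweredSet hA hV)⟩

end Lower

end Ptn

open Ptn in
/-- For every partition `lam` and `k ≥ 0`, the number of `1`-asymmetric
partitions `ν` with `lam ≺ ν` and `|ν/lam| = k` equals the number of
`1`-asymmetric partitions `μ` with `μ ≺' lam` and `|lam/μ| = k`. -/
theorem projection_one_asymmetric (lam : Ptn) (k : ℕ) :
    Nat.card {ν : Ptn // Asym1 ν ∧ HStrip lam ν ∧ skewSize ν lam = k} =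
      Nat.card {mu : Ptn // Asym1 mu ∧ VStrip mu lam ∧ skewSize lam mu = k} := by
  rw [card_hstrip_eq, card_vstrip_eq]
  exact card_admissible_congr le_rfl zero_le_one fun m =>
    k + ∑ j ∈ range (durfee lam), (lam.part j + 1) =
      2 * m + ∑ j ∈ range (durfee lam), (conj lam).part j
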